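/- Let V be an n-dimensional ℂ-vector space with a decomposition V = V_1 ⊕ V_2, and let F ∈ S^d V be a homogeneous form of degree d. Then F = F_1 + F_2 with F_1 ∈ S^d V_1 and F_2 ∈ S^d V_2 if and only if every product of a linear form in V_1^* with a linear form in V_2^* lies in F^⊥ (that is, V_1^* · V_2^* ⊆ (F^⊥)_2, where V_1^* ⊆ T_1 is the annihilator of V_2 and V_2^* ⊆ T_1 is the annihilator of V_1). -/

import Mathlib

/-!
Apolarity setup.  `S = ℂ[x_1,…,x_n]` and its dual ring `T = ℂ[α_1,…,α_n]` are both
realized as `MvPolynomial (Fin n) ℂ`; the apolarity action `Θ ⌟ F` (`contract Θ F`)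
lets `α_i` act as the partial differentiation operator `∂/∂x_i`.
-/

open MvPolynomial

noncomputable section Apolarity

/-- Partial derivatives on `ℂ[x_1,…,x_n]` commute. -/
lemma pderiv_pderiv_comm (n : ℕ) (i j : Fin n) (f : MvPolynomial (Fin n) ℂ) :
    pderiv i (pderiv j f) = pderiv j (pderiv i f) := by
  induction f using MvPolynomial.induction_on with
  | C a => simp
  | add p q hp hq => simp [hp, hq]
  | mul_X p k hp =>
    rcases eq_or_ne i k with rfl | hik
    · rcases eq_or_ne j i with rfl | hjk
      · rfl
      · simp only [pderiv_mul, pderiv_X_self, pderiv_X_of_ne hjk, pderiv_X_of_ne hjk.symm,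
          map_add, map_zero, map_one, Derivation.map_one_eq_zero, mul_one, mul_zero,
          add_zero, zero_add, hp]
    · rcases eq_or_ne j k with rfl | hjk
      · simp only [pderiv_mul, pderiv_X_self, pderiv_X_of_ne hik, pderiv_X_of_ne hik.symm,
          map_add, map_zero, map_one, Derivation.map_one_eq_zero, mul_one, mul_zero,
          add_zero, zero_add, hp]
      · simp only [pderiv_mul, pderiv_X_of_ne hik.symm, pderiv_X_of_ne hjk.symm, map_add,
          map_zero, mul_zero, add_zero, zero_add, hp]

variable (n : ℕ)

/-- The endomorphism `∂/∂x_i` of `S = ℂ[x_1,…,x_n]`. -/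
def derOp (i : Fin n) : Module.End ℂ (MvPolynomial (Fin n) ℂ) :=
  (pderiv i).toLinearMap

lemma derOp_commute (i j : Fin n) : Commute (derOp n i) (derOp n j) :=
  LinearMap.ext fun f => pderiv_pderiv_comm n i j f

/-- The commuting product of the operators `(∂/∂x_i)^(m i)`. -/
def piDiffHom : (Fin n → Multiplicative ℕ) →* Module.End ℂ (MvPolynomial (Fin n) ℂ) :=
  MonoidHom.noncommPiCoprod (fun i : Fin n => powersHom _ (derOp n i))
    (fun i j _ x y => ((derOp_commute n i j).pow_pow x y))

/-- The differential operator `∏ i, (∂/∂x_i)^(m i)` attached to an exponent vector `m`. -/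
def diffMonoidHom : Multiplicative (Fin n →₀ ℕ) →* Module.End ℂ (MvPolynomial (Fin n) ℂ) :=
  (piDiffHom n).comp
    (AddMonoidHom.toMultiplicative
      (Finsupp.coeFnAddHom : (Fin n →₀ ℕ) →+ (Fin n → ℕ)))

/-- The apolarity action of the dual ring `T = ℂ[α_1,…,α_n]` on `S = ℂ[x_1,…,x_n]`, as an
algebra homomorphism to differential operators: `α_i` acts as `∂/∂x_i`. -/
def apolarAlgHom :
    MvPolynomial (Fin n) ℂ →ₐ[ℂ] Module.End ℂ (MvPolynomial (Fin n) ℂ) :=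
  AddMonoidAlgebra.lift ℂ _ (Fin n →₀ ℕ) (diffMonoidHom n)

variable {n}

/-- The apolarity action `Θ ⌟ F`: apply to `F` the differential operator obtained from `Θ`
by substituting `∂/∂x_i` for the `i`-th (dual) variable. -/
def contract (Θ F : MvPolynomial (Fin n) ℂ) : MvPolynomial (Fin n) ℂ :=
  apolarAlgHom n Θ F

lemma apolarAlgHom_X (i : Fin n) : apolarAlgHom n (X i) = derOp n i := by
  classical
  have hX : (X i : MvPolynomial (Fin n) ℂ)
      = AddMonoidAlgebra.single (Finsupp.single i 1) (1 : ℂ) := rfl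
  rw [hX]
  rw [show apolarAlgHom n (AddMonoidAlgebra.single (Finsupp.single i 1) (1:ℂ))
      = (1:ℂ) • diffMonoidHom n (Multiplicative.ofAdd (Finsupp.single i 1)) from
    AddMonoidAlgebra.lift_single _ _ _]
  rw [one_smul]
  show piDiffHom n ((AddMonoidHom.toMultiplicative
      (Finsupp.coeFnAddHom : (Fin n →₀ ℕ) →+ (Fin n → ℕ)))
      (Multiplicative.ofAdd (Finsupp.single i 1))) = derOp n i
  have harg : (AddMonoidHom.toMultiplicative
        (Finsupp.coeFnAddHom : (Fin n →₀ ℕ) →+ (Fin n → ℕ)))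
        (Multiplicative.ofAdd (Finsupp.single i 1))
      = Pi.mulSingle (M := fun _ : Fin n => Multiplicative ℕ) i (Multiplicative.ofAdd 1) := by
    funext j
    rcases eq_or_ne j i with rfl | hj
    · show Multiplicative.ofAdd ((Finsupp.single j 1 : Fin n →₀ ℕ) j)
        = Pi.mulSingle (M := fun _ : Fin n => Multiplicative ℕ) j (Multiplicative.ofAdd 1) j
      rw [Finsupp.single_eq_same, Pi.mulSingle_eq_same]
    · show Multiplicative.ofAdd ((Finsupp.single i 1 : Fin n →₀ ℕ) j)
        = Pi.mulSingle (M := fun _ : Fin n => Multiplicative ℕ) i (Multiplicative.ofAdd 1) j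
      rw [Finsupp.single_eq_of_ne hj, Pi.mulSingle_eq_of_ne hj]
      exact ofAdd_zero
  refine (congrArg (piDiffHom n) harg).trans ?_
  rw [piDiffHom]
  refine (MonoidHom.noncommPiCoprod_mulSingle (ϕ := fun i : Fin n => powersHom _ (derOp n i))
    (i := i) (y := Multiplicative.ofAdd 1)).trans ?_
  rfl

/-- Sanity check: the dual variable `α_i` acts on `F` as `∂F/∂x_i`. -/
@[simp] lemma contract_X (i : Fin n) (F : MvPolynomial (Fin n) ℂ) :
    contract (X i) F = pderiv i F := by
  rw [contract, apolarAlgHom_X]; rfl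

/-- The apolar (annihilator) ideal `F^⊥ = {Θ ∈ T : Θ ⌟ F = 0}` of a polynomial `F`. -/
def apolarIdeal (F : MvPolynomial (Fin n) ℂ) : Ideal (MvPolynomial (Fin n) ℂ) where
  carrier := {Θ | contract Θ F = 0}
  zero_mem' := by simp [contract]
  add_mem' := by
    intro a b ha hb
    simp only [Set.mem_setOf_eq, contract, map_add, LinearMap.add_apply] at *
    rw [ha, hb, add_zero]
  smul_mem' := by
    intro c x hx
    simp only [Set.mem_setOf_eq, smul_eq_mul, contract, map_mul, Module.End.mul_apply] at *
    rw [hx, map_zero]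

@[simp] lemma mem_apolarIdeal {Θ F : MvPolynomial (Fin n) ℂ} :
    Θ ∈ apolarIdeal F ↔ contract Θ F = 0 := Iff.rfl

variable (n)

/-- The irrelevant maximal ideal `m = ⟨α_1,…,α_n⟩` of `T`. -/
def irrIdeal : Ideal (MvPolynomial (Fin n) ℂ) :=
  Ideal.span (Set.range X)

variable {n}

/-- The homogeneous ideal `I` has a minimal generator of degree `k`, i.e. `(I/mI)_k ≠ 0`:
there is a homogeneous element of `I` of degree `k` not belonging to `m * I`. -/
def HasMinGenOfDegree (I : Ideal (MvPolynomial (Fin n) ℂ)) (k : ℕ) : Prop :=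
  ∃ Θ, Θ ∈ I ∧ Θ.IsHomogeneous k ∧ Θ ∉ irrIdeal n * I

/-- The homogeneous ideal `I` has at least `r` minimal generators of degree `k`, i.e.
`dim_ℂ (I/mI)_k ≥ r`: there are `r` homogeneous degree-`k` elements of `I` that are
linearly independent modulo `m * I`. -/
def MinGensAtLeast (I : Ideal (MvPolynomial (Fin n) ℂ)) (k r : ℕ) : Prop :=
  ∃ Θ : Fin r → MvPolynomial (Fin n) ℂ,
    (∀ i, Θ i ∈ I ∧ (Θ i).IsHomogeneous k) ∧
    ∀ c : Fin r → ℂ, (∑ i, c i • Θ i) ∈ irrIdeal n * I → ∀ i, c i = 0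

/-- `F` is an `s`-fold direct sum of degree `d`: `F = F_1 + ⋯ + F_s` where the `F_i` are
nonzero degree-`d` forms in independent subspaces `V_i` of the space of linear forms with
`V = V_1 ⊕ ⋯ ⊕ V_s` (i.e. in disjoint sets of variables, up to linear change of variables;
`F_i ∈ S^d V_i` is expressed as membership in the subalgebra generated by `V_i`). -/
def IsSFoldDirectSum (F : MvPolynomial (Fin n) ℂ) (d s : ℕ) : Prop :=
  ∃ (V : Fin s → Submodule ℂ (MvPolynomial (Fin n) ℂ))
    (G : Fin s → MvPolynomial (Fin n) ℂ),
    (∀ i, V i ≤ homogeneousSubmodule (Fin n) ℂ 1) ∧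
    iSupIndep V ∧
    (⨆ i, V i) = homogeneousSubmodule (Fin n) ℂ 1 ∧
    (∀ i, G i ≠ 0 ∧ (G i).IsHomogeneous d ∧ G i ∈ Algebra.adjoin ℂ (V i : Set _)) ∧
    F = ∑ i, G i

/-- `F` is a direct sum: `F = F₁ + F₂` with `F₁ ∈ S^d V₁`, `F₂ ∈ S^d V₂` nonzero and
`V = V₁ ⊕ V₂`. -/
def IsDirectSum (F : MvPolynomial (Fin n) ℂ) (d : ℕ) : Prop :=
  IsSFoldDirectSum F d 2

/-- `F` is a limit (as `t → 0`) of `s`-fold direct sums of degree `d`. -/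
def IsLimitOfSFoldDirectSums (F : MvPolynomial (Fin n) ℂ) (d s : ℕ) : Prop :=
  ∃ G : ℂ → MvPolynomial (Fin n) ℂ,
    (∀ t : ℂ, t ≠ 0 → IsSFoldDirectSum (G t) d s) ∧
    ∀ m : Fin n →₀ ℕ,
      Filter.Tendsto (fun t => MvPolynomial.coeff m (G t))
        (nhdsWithin (0 : ℂ) {(0 : ℂ)}ᶜ) (nhds (MvPolynomial.coeff m F))

/-- `F` is a limit of direct sums. -/
def IsLimitOfDirectSums (F : MvPolynomial (Fin n) ℂ) (d : ℕ) : Prop :=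
  IsLimitOfSFoldDirectSums F d 2

/-- `F` is concise: `(F^⊥)_1 = 0`, i.e. `F` cannot be written using fewer variables. -/
def Concise (F : MvPolynomial (Fin n) ℂ) : Prop :=
  ∀ Θ : MvPolynomial (Fin n) ℂ, Θ.IsHomogeneous 1 → contract Θ F = 0 → Θ = 0

end Apolarity

/-!
Choose a basis `b` of the linear forms made of a basis of `V₁` followed by a basis of `V₂`, and
let `β` be the dual basis of `T₁`. In the coordinates `y` of `b`, contracting by `β_j` is
`∂/∂y_j`, so the hypothesis says that `∂²F/∂y_i∂y_j = 0` whenever `b_i ∈ V₁` and `b_j ∈ V₂`.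
In characteristic zero this kills every monomial of `F(y)` that mixes the two groups of
variables, so `F` splits as a form in the `V₁`-variables plus a form in the `V₂`-variables.
Conversely a linear form contracts as a derivation, so it annihilates the algebra generated
by any set of linear forms it annihilates.
-/

theorem Derivation.map_mvPolynomial_aeval {R A M σ : Type*} [CommSemiring R] [CommSemiring A]
    [Algebra R A] [AddCommMonoid M] [Module A M] [Module R M] [Fintype σ]
    (D : Derivation R A M) (c : σ → A) (p : MvPolynomial σ R) :
    D (aeval c p) = ∑ j, aeval c (pderiv j p) • D (c j) := by
  classical
  induction p using MvPolynomial.induction_on with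
  | C a => simp
  | add p q hp hq => simp [hp, hq, add_smul, Finset.sum_add_distrib]
  | mul_X p k hp =>
    simp [Derivation.leibniz, pderiv_X, Pi.single_apply, add_smul, mul_smul,
      Finset.sum_add_distrib, Finset.smul_sum, hp, apply_ite (aeval c)]

namespace MvPolynomial

variable {R σ : Type*} [CommSemiring R]

theorem support_subset_or_subset_compl_of_pderiv_pderiv_eq_zero [NoZeroDivisors R] [CharZero R]
    {s : Set σ} {p : MvPolynomial σ R} (h : ∀ i ∈ s, ∀ j ∉ s, pderiv i (pderiv j p) = 0)
    {m : σ →₀ ℕ} (hm : m ∈ p.support) :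
    ↑m.support ⊆ s ∨ ↑m.support ⊆ sᶜ := by
  classical
  by_contra! hmixed
  obtain ⟨j, hjm, hjs⟩ := Set.not_subset.mp hmixed.1
  obtain ⟨i, him, his⟩ := Set.not_subset.mp hmixed.2
  rw [Set.notMem_compl_iff] at his
  rw [Finset.mem_coe, Finsupp.mem_support_iff] at him hjm
  have hij : i ≠ j := fun e => hjs (e ▸ his)
  -- The coefficient of `m - xᵢ - xⱼ` in `∂ᵢ∂ⱼp` is a nonzero multiple of the coefficient of `m`.
  set m' := m - Finsupp.single i 1 - Finsupp.single j 1
  have hm' : m' + Finsupp.single i 1 + Finsupp.single j 1 = m := by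
    ext k
    simp only [m', Finsupp.add_apply, Finsupp.tsub_apply, Finsupp.single_apply]
    grind
  have hcoeff := congrArg (coeff m') (h i his j hjs)
  rw [coeff_pderiv, coeff_pderiv, hm', coeff_zero] at hcoeff
  simp only [mul_eq_zero, Nat.cast_add_one_ne_zero, or_false] at hcoeff
  exact mem_support_iff.mp hm hcoeff

theorem monomial_mem_supported {s : Set σ} {m : σ →₀ ℕ} (hm : ↑m.support ⊆ s) (r : R) :
    monomial m r ∈ supported R s := by
  rcases eq_or_ne r 0 with rfl | hr
  · simp
  · rwa [mem_supported, vars_monomial hr]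

theorem IsHomogeneous.exists_add_of_support_subset_or {s : Set σ} {p : MvPolynomial σ R}
    {d : ℕ} (hp : p.IsHomogeneous d) (h : ∀ m ∈ p.support, ↑m.support ⊆ s ∨ ↑m.support ⊆ sᶜ) :
    ∃ p₁ p₂ : MvPolynomial σ R, p₁.IsHomogeneous d ∧ p₁ ∈ supported R s ∧
      p₂.IsHomogeneous d ∧ p₂ ∈ supported R sᶜ ∧ p = p₁ + p₂ := by
  classical
  let part (P : (σ →₀ ℕ) → Prop) [DecidablePred P] : MvPolynomial σ R :=
    ∑ m ∈ p.support.filter P, monomial m (coeff m p)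
  have hpart (P : (σ →₀ ℕ) → Prop) [DecidablePred P] : (part P).IsHomogeneous d :=
    IsHomogeneous.sum _ _ _ fun m hm => isHomogeneous_monomial _ <| by
      rw [Finsupp.degree_eq_weight_one]
      exact hp (mem_support_iff.mp (Finset.mem_filter.mp hm).1)
  refine ⟨part (fun m => ↑m.support ⊆ s), part (fun m => ¬ ↑m.support ⊆ s), hpart _,
    Subalgebra.sum_mem _ fun m hm => monomial_mem_supported (Finset.mem_filter.mp hm).2 _,
    hpart _, Subalgebra.sum_mem _ fun m hm => ?_, ?_⟩
  · obtain ⟨hm, hms⟩ := Finset.mem_filter.mp hm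
    exact monomial_mem_supported ((h m hm).resolve_left hms) _
  · rw [Finset.sum_filter_add_sum_filter_not]
    exact p.as_sum

theorem aeval_mem_adjoin_image {A : Type*} [CommSemiring A] [Algebra R A] (f : σ → A)
    {s : Set σ} {p : MvPolynomial σ R} (hp : p ∈ supported R s) :
    aeval f p ∈ Algebra.adjoin R (f '' s) := by
  rw [supported_eq_adjoin_X] at hp
  have hmap : aeval f p ∈ (Algebra.adjoin R (X '' s)).map (aeval f) := ⟨p, hp, rfl⟩
  rw [AlgHom.map_adjoin, Set.image_image] at hmap
  simpa only [aeval_X] using hmap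

instance finite_homogeneousSubmodule [Finite σ] (d : ℕ) :
    Module.Finite R (homogeneousSubmodule σ R d) :=
  Module.Finite.iff_fg.mpr (homogeneousSubmodule_fg (σ := σ) (R := R) d)

end MvPolynomial
theorem Submodule.isCompl_comap_subtype_of_inf_eq_bot_of_sup_eq {K M : Type*} [Ring K]
    [AddCommGroup M] [Module K M] {p q W : Submodule K M} (hp : p ≤ W) (hq : q ≤ W)
    (hinf : p ⊓ q = ⊥) (hsup : p ⊔ q = W) :
    IsCompl (p.comap W.subtype) (q.comap W.subtype) := by
  constructor
  · rw [Submodule.disjoint_def]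
    intro x hxp hxq
    have hx : (x : M) ∈ p ⊓ q := ⟨hxp, hxq⟩
    rw [hinf, Submodule.mem_bot] at hx
    exact Subtype.ext hx
  · rw [codisjoint_iff, eq_top_iff]
    rintro ⟨x, hx⟩ -
    rw [← hsup, Submodule.mem_sup] at hx
    obtain ⟨y, hy, z, hz, rfl⟩ := hx
    exact Submodule.mem_sup.mpr ⟨⟨y, hp hy⟩, hy, ⟨z, hq hz⟩, hz, rfl⟩

section AdaptedBasis

variable {K E : Type*} [Field K] [AddCommGroup E] [Module K E] [FiniteDimensional K E]
  {p q : Submodule K E} (h : IsCompl p q)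

noncomputable def basisOfIsCompl :
    Module.Basis (Fin (Module.finrank K p) ⊕ Fin (Module.finrank K q)) K E :=
  ((Module.finBasis K p).prod (Module.finBasis K q)).map (Submodule.prodEquivOfIsCompl p q h)

theorem basisOfIsCompl_inl_mem (i : Fin (Module.finrank K p)) :
    basisOfIsCompl h (Sum.inl i) ∈ p := by
  simp [basisOfIsCompl]

theorem basisOfIsCompl_inr_mem (i : Fin (Module.finrank K q)) :
    basisOfIsCompl h (Sum.inr i) ∈ q := by
  simp [basisOfIsCompl]

theorem basisOfIsCompl_repr_inl_of_mem_right {x : E} (hx : x ∈ q)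
    (i : Fin (Module.finrank K p)) : (basisOfIsCompl h).repr x (Sum.inl i) = 0 := by
  simp [basisOfIsCompl, Module.Basis.prod_repr_inl,
    (Submodule.projectionOnto_apply_eq_zero_iff h).mpr hx]

theorem basisOfIsCompl_repr_inr_of_mem_left {x : E} (hx : x ∈ p)
    (i : Fin (Module.finrank K q)) : (basisOfIsCompl h).repr x (Sum.inr i) = 0 := by
  simp [basisOfIsCompl, Module.Basis.prod_repr_inr,
    (Submodule.projectionOnto_apply_eq_zero_iff h.symm).mpr hx]

end AdaptedBasis

noncomputable section ApolarityLemmas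

variable {n : ℕ}

theorem contract_add (Θ F G : MvPolynomial (Fin n) ℂ) :
    contract Θ (F + G) = contract Θ F + contract Θ G :=
  map_add _ F G

theorem contract_zero (Θ : MvPolynomial (Fin n) ℂ) : contract Θ 0 = 0 :=
  map_zero _

theorem contract_mul (Θ₁ Θ₂ F : MvPolynomial (Fin n) ℂ) :
    contract (Θ₁ * Θ₂) F = contract Θ₁ (contract Θ₂ F) := by
  simp only [contract, map_mul, Module.End.mul_apply]

theorem contract_sum_smul_X (c : Fin n → ℂ) (F : MvPolynomial (Fin n) ℂ) :
    contract (∑ a, c a • X a) F = ∑ a, c a • pderiv a F := by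
  rw [contract, map_sum, LinearMap.sum_apply]
  refine Finset.sum_congr rfl fun a _ => ?_
  rw [map_smul, LinearMap.smul_apply, ← contract, contract_X]

theorem exists_derivation_contract_eq {ℓ : MvPolynomial (Fin n) ℂ} (hℓ : ℓ.IsHomogeneous 1) :
    ∃ D : Derivation ℂ (MvPolynomial (Fin n) ℂ) (MvPolynomial (Fin n) ℂ),
      ∀ F, contract ℓ F = D F := by
  rw [← mem_homogeneousSubmodule, homogeneousSubmodule_one_eq_span_X,
    Submodule.mem_span_range_iff_exists_fun] at hℓ
  obtain ⟨c, rfl⟩ := hℓ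
  refine ⟨∑ a, c a • pderiv a, fun F => ?_⟩
  rw [contract_sum_smul_X, ← Derivation.coeFnAddMonoidHom_apply, map_sum, Finset.sum_apply]
  rfl

theorem contract_eq_zero_of_mem_adjoin {ℓ : MvPolynomial (Fin n) ℂ} (hℓ : ℓ.IsHomogeneous 1)
    {s : Set (MvPolynomial (Fin n) ℂ)} (hs : ∀ v ∈ s, contract ℓ v = 0)
    {G : MvPolynomial (Fin n) ℂ} (hG : G ∈ Algebra.adjoin ℂ s) : contract ℓ G = 0 := by
  obtain ⟨D, hD⟩ := exists_derivation_contract_eq hℓ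
  rw [hD]
  exact Derivation.eqOn_adjoin (D1 := D) (D2 := 0) (fun v hv => by rw [← hD, hs v hv]; rfl) hG

theorem mul_mem_apolarIdeal_add {s₁ s₂ : Set (MvPolynomial (Fin n) ℂ)}
    {F₁ F₂ ℓ₁ ℓ₂ : MvPolynomial (Fin n) ℂ}
    (hF₁ : F₁ ∈ Algebra.adjoin ℂ s₁) (hF₂ : F₂ ∈ Algebra.adjoin ℂ s₂)
    (hℓ₁ : ℓ₁.IsHomogeneous 1) (h₁ : ∀ v ∈ s₂, contract ℓ₁ v = 0)
    (hℓ₂ : ℓ₂.IsHomogeneous 1) (h₂ : ∀ v ∈ s₁, contract ℓ₂ v = 0) :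
    ℓ₁ * ℓ₂ ∈ apolarIdeal (F₁ + F₂) := by
  rw [mem_apolarIdeal, contract_add, contract_mul, mul_comm, contract_mul,
    contract_eq_zero_of_mem_adjoin hℓ₂ h₂ hF₁, contract_eq_zero_of_mem_adjoin hℓ₁ h₁ hF₂,
    contract_zero, contract_zero, add_zero]

variable {ι : Type*} (B : Module.Basis ι ℂ (homogeneousSubmodule (Fin n) ℂ 1))

def dualForm (j : ι) : MvPolynomial (Fin n) ℂ :=
  ∑ a, B.repr ⟨X a, isHomogeneous_X ℂ a⟩ j • X a

def toBasisCoords [Fintype ι] : MvPolynomial (Fin n) ℂ →ₐ[ℂ] MvPolynomial ι ℂ :=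
  aeval fun a => ∑ j, B.repr ⟨X a, isHomogeneous_X ℂ a⟩ j • X j

theorem isHomogeneous_dualForm (j : ι) : (dualForm B j).IsHomogeneous 1 :=
  Submodule.sum_mem (homogeneousSubmodule _ ℂ 1) fun a _ =>
    Submodule.smul_mem _ _ (isHomogeneous_X ℂ a)

theorem isHomogeneous_toBasisCoords [Fintype ι] {F : MvPolynomial (Fin n) ℂ} {d : ℕ}
    (hF : F.IsHomogeneous d) : (toBasisCoords B F).IsHomogeneous d := by
  have hlin (a : Fin n) :
      (∑ j, B.repr ⟨X a, isHomogeneous_X ℂ a⟩ j • X j : MvPolynomial ι ℂ).IsHomogeneous 1 :=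
    Submodule.sum_mem (homogeneousSubmodule _ ℂ 1) fun j _ =>
      Submodule.smul_mem _ _ (isHomogeneous_X ℂ j)
  rw [toBasisCoords]
  simpa only [one_mul] using hF.aeval _ hlin

theorem aeval_basis_toBasisCoords [Fintype ι] (F : MvPolynomial (Fin n) ℂ) :
    aeval (fun j => (B j : MvPolynomial (Fin n) ℂ)) (toBasisCoords B F) = F := by
  rw [toBasisCoords, ← AlgHom.comp_apply, comp_aeval]
  have hX (a : Fin n) : aeval (fun j => (B j : MvPolynomial (Fin n) ℂ))
      (∑ j, B.repr ⟨X a, isHomogeneous_X ℂ a⟩ j • X j : MvPolynomial ι ℂ) = X a := by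
    simp only [map_sum, map_smul, aeval_X]
    simpa only [Submodule.coe_sum, Submodule.coe_smul] using
      congrArg Subtype.val (B.sum_repr ⟨X a, isHomogeneous_X ℂ a⟩)
  simp only [hX, aeval_X_left_apply]

theorem pderiv_toBasisCoords [Fintype ι] (j : ι) (F : MvPolynomial (Fin n) ℂ) :
    pderiv j (toBasisCoords B F) = toBasisCoords B (contract (dualForm B j) F) := by
  classical
  rw [toBasisCoords, Derivation.map_mvPolynomial_aeval, dualForm, contract_sum_smul_X, map_sum]
  refine Finset.sum_congr rfl fun a _ => ?_
  simp [pderiv_X, Pi.single_apply, smul_eq_C_mul, mul_comm]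

theorem contract_dualForm (j : ι) (v : homogeneousSubmodule (Fin n) ℂ 1) :
    contract (dualForm B j) v = C (B.repr v j) := by
  classical
  obtain ⟨v, hv⟩ := v
  obtain ⟨c, rfl⟩ := (Submodule.mem_span_range_iff_exists_fun ℂ).mp
    (homogeneousSubmodule_one_eq_span_X (σ := Fin n) (R := ℂ) ▸ hv)
  have hsum : (⟨∑ a, c a • X a, hv⟩ : homogeneousSubmodule (Fin n) ℂ 1) =
      ∑ a, c a • ⟨X a, isHomogeneous_X ℂ a⟩ := Subtype.ext (by simp)
  rw [hsum, dualForm, contract_sum_smul_X]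
  simp [pderiv_X, Pi.single_apply, smul_eq_C_mul, mul_comm]

theorem exists_add_mem_adjoin_of_dualForm_mul_mem [Fintype ι] {s : Set ι}
    {F : MvPolynomial (Fin n) ℂ} {d : ℕ} (hF : F.IsHomogeneous d)
    (h : ∀ i ∈ s, ∀ j ∉ s, dualForm B i * dualForm B j ∈ apolarIdeal F) :
    ∃ F₁ F₂ : MvPolynomial (Fin n) ℂ,
      F₁.IsHomogeneous d ∧ F₁ ∈ Algebra.adjoin ℂ ((fun i => (B i : MvPolynomial (Fin n) ℂ)) '' s) ∧
      F₂.IsHomogeneous d ∧ F₂ ∈ Algebra.adjoin ℂ ((fun i => (B i : MvPolynomial (Fin n) ℂ)) '' sᶜ) ∧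
      F = F₁ + F₂ := by
  set b : ι → MvPolynomial (Fin n) ℂ := fun i => B i
  have hmixed (i) (hi : i ∈ s) (j) (hj : j ∉ s) :
      pderiv i (pderiv j (toBasisCoords B F)) = 0 := by
    rw [pderiv_toBasisCoords, pderiv_toBasisCoords, ← contract_mul,
      mem_apolarIdeal.mp (h i hi j hj), map_zero]
  obtain ⟨G₁, G₂, hG₁, hG₁s, hG₂, hG₂s, hG⟩ :=
    (isHomogeneous_toBasisCoords B hF).exists_add_of_support_subset_or fun _ hm =>
      support_subset_or_subset_compl_of_pderiv_pderiv_eq_zero hmixed hm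
  have hb (j : ι) : (b j).IsHomogeneous 1 := (B j).2
  refine ⟨aeval b G₁, aeval b G₂,
    by simpa only [one_mul] using hG₁.aeval _ hb, aeval_mem_adjoin_image _ hG₁s,
    by simpa only [one_mul] using hG₂.aeval _ hb, aeval_mem_adjoin_image _ hG₂s, ?_⟩
  rw [← map_add, ← hG, aeval_basis_toBasisCoords]

end ApolarityLemmas

/-- For a decomposition `V = V₁ ⊕ V₂` of the space of linear forms and a
degree-`d` form `F`, one has `F = F₁ + F₂` with `F₁ ∈ S^d V₁`, `F₂ ∈ S^d V₂` if and only if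
every product of a linear form annihilating `V₂` with a linear form annihilating `V₁`
lies in `F^⊥` (i.e. `V₁^* · V₂^* ⊆ (F^⊥)₂`). -/
theorem direct_sum_iff_quadrics
    (n d : ℕ) (F : MvPolynomial (Fin n) ℂ) (hF : F.IsHomogeneous d)
    (V₁ V₂ : Submodule ℂ (MvPolynomial (Fin n) ℂ))
    (hV₁ : V₁ ≤ homogeneousSubmodule (Fin n) ℂ 1)
    (hV₂ : V₂ ≤ homogeneousSubmodule (Fin n) ℂ 1)
    (hdisj : V₁ ⊓ V₂ = ⊥)
    (hsup : V₁ ⊔ V₂ = homogeneousSubmodule (Fin n) ℂ 1) :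
    (∃ F₁ F₂ : MvPolynomial (Fin n) ℂ,
        F₁.IsHomogeneous d ∧ F₁ ∈ Algebra.adjoin ℂ (V₁ : Set (MvPolynomial (Fin n) ℂ)) ∧
        F₂.IsHomogeneous d ∧ F₂ ∈ Algebra.adjoin ℂ (V₂ : Set (MvPolynomial (Fin n) ℂ)) ∧
        F = F₁ + F₂) ↔
    (∀ ℓ₁ ℓ₂ : MvPolynomial (Fin n) ℂ,
        ℓ₁.IsHomogeneous 1 → (∀ v ∈ V₂, contract ℓ₁ v = 0) →
        ℓ₂.IsHomogeneous 1 → (∀ v ∈ V₁, contract ℓ₂ v = 0) →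
        ℓ₁ * ℓ₂ ∈ apolarIdeal F) := by
  refine ⟨fun ⟨F₁, F₂, _, hF₁, _, hF₂, hF⟩ ℓ₁ ℓ₂ hℓ₁ h₁ hℓ₂ h₂ =>
    hF ▸ mul_mem_apolarIdeal_add hF₁ hF₂ hℓ₁ h₁ hℓ₂ h₂, fun H => ?_⟩
  have hc := Submodule.isCompl_comap_subtype_of_inf_eq_bot_of_sup_eq hV₁ hV₂ hdisj hsup
  let B := basisOfIsCompl hc
  have hmixed : ∀ i ∈ Set.range Sum.inl, ∀ j ∉ Set.range Sum.inl,
      dualForm B i * dualForm B j ∈ apolarIdeal F := by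
    rintro _ ⟨i, rfl⟩ (_ | j) hj
    · exact absurd ⟨_, rfl⟩ hj
    refine H _ _ (isHomogeneous_dualForm B _) (fun v hv => ?_) (isHomogeneous_dualForm B _)
      (fun v hv => ?_)
    · rw [show v = ((⟨v, hV₂ hv⟩ : homogeneousSubmodule (Fin n) ℂ 1) : _) from rfl,
        contract_dualForm, basisOfIsCompl_repr_inl_of_mem_right hc hv, map_zero]
    · rw [show v = ((⟨v, hV₁ hv⟩ : homogeneousSubmodule (Fin n) ℂ 1) : _) from rfl,
        contract_dualForm, basisOfIsCompl_repr_inr_of_mem_left hc hv, map_zero]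
  obtain ⟨F₁, F₂, hF₁d, hF₁, hF₂d, hF₂, rfl⟩ :=
    exists_add_mem_adjoin_of_dualForm_mul_mem B hF hmixed
  rw [Set.compl_range_inl] at hF₂
  refine ⟨F₁, F₂, hF₁d, Algebra.adjoin_mono ?_ hF₁, hF₂d, Algebra.adjoin_mono ?_ hF₂, rfl⟩
  · rintro _ ⟨_, ⟨i, rfl⟩, rfl⟩
    exact basisOfIsCompl_inl_mem hc i
  · rintro _ ⟨_, ⟨i, rfl⟩, rfl⟩
    exact basisOfIsCompl_inr_mem hc i
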